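/- arXiv:1609.02494 — 10 statements merged into one kernel-verified Lean document; each statement's English description precedes it below -/
import Mathlib

section
/- Let s : I → ℝ be twice differentiable and strictly positive on an open interval I, satisfying s''(t) = s'(t)²/(2·s(t)) + (3/2)·s(t)³ + 4t·s(t)² + 2t²·s(t) for all t ∈ I. Then σ := √s is twice differentiable on I and satisfies 4·σ''(t) = σ(t)·(3·σ(t)² + 2t)·(σ(t)² + 2t) for all t ∈ I. -/
open Filter Topology

/- With σ = √s one has 4σ'' = (2s s'' - s'²)/(s σ), so the equation for s turns the right-hand
side into (3s³ + 8t s² + 4t² s)/σ = σ (3σ² + 2t)(σ² + 2t). -/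

theorem hasDerivAt_deriv_sqrt_comp {f : ℝ → ℝ} {t : ℝ}
    (hf : ∀ᶠ x in 𝓝 t, DifferentiableAt ℝ f x) (hf' : DifferentiableAt ℝ (deriv f) t)
    (hft : 0 < f t) :
    HasDerivAt (deriv fun x => √(f x))
      (deriv (deriv f) t / (2 * √(f t)) - deriv f t ^ 2 / (4 * f t * √(f t))) t := by
  have hpos : ∀ᶠ x in 𝓝 t, 0 < f x :=
    continuousAt_const.eventually_lt hf.self_of_nhds.continuousAt hft
  have hderiv : (deriv fun x => √(f x)) =ᶠ[𝓝 t] fun x => deriv f x / (2 * √(f x)) := by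
    filter_upwards [hf, hpos] with x hx hxpos
    exact deriv_sqrt hx hxpos.ne'
  have hsqrt : 0 < √(f t) := Real.sqrt_pos.mpr hft
  have hquot := hf'.hasDerivAt.div
    ((hf.self_of_nhds.hasDerivAt.sqrt hft.ne').const_mul 2) (by positivity)
  refine (hquot.congr_of_eventuallyEq hderiv).congr_deriv ?_
  set r := √(f t)
  rw [show f t = r ^ 2 from (Real.sq_sqrt hft.le).symm]
  field_simp
  ring

theorem four_mul_sqrt_second_deriv_of_painleve {s s' s'' t : ℝ} (hs : 0 < s)
    (heq : s'' = s' ^ 2 / (2 * s) + (3 / 2) * s ^ 3 + 4 * t * s ^ 2 + 2 * t ^ 2 * s) :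
    4 * (s'' / (2 * √s) - s' ^ 2 / (4 * s * √s))
      = √s * (3 * √s ^ 2 + 2 * t) * (√s ^ 2 + 2 * t) := by
  have hsqrt : 0 < √s := Real.sqrt_pos.mpr hs
  rw [heq]
  set r := √s
  rw [show s = r ^ 2 from (Real.sq_sqrt hs.le).symm]
  field_simp
  ring

theorem stmt_3_general (I : Set ℝ) (hI : IsOpen I) (s : ℝ → ℝ)
    (hs1 : ∀ t ∈ I, DifferentiableAt ℝ s t)
    (hs2 : ∀ t ∈ I, DifferentiableAt ℝ (deriv s) t)
    (hpos : ∀ t ∈ I, 0 < s t)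
    (heq : ∀ t ∈ I, deriv (deriv s) t
      = (deriv s t) ^ 2 / (2 * s t) + (3 / 2) * (s t) ^ 3 + 4 * t * (s t) ^ 2 + 2 * t ^ 2 * s t) :
    (∀ t ∈ I, DifferentiableAt ℝ (fun u => Real.sqrt (s u)) t) ∧
    (∀ t ∈ I, DifferentiableAt ℝ (deriv (fun u => Real.sqrt (s u))) t) ∧
    (∀ t ∈ I, 4 * deriv (deriv (fun u => Real.sqrt (s u))) t
      = Real.sqrt (s t) * (3 * (Real.sqrt (s t)) ^ 2 + 2 * t) * ((Real.sqrt (s t)) ^ 2 + 2 * t)) := by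
  have hsecond : ∀ t ∈ I, HasDerivAt (deriv fun u => √(s u))
      (deriv (deriv s) t / (2 * √(s t)) - deriv s t ^ 2 / (4 * s t * √(s t))) t :=
    fun t ht => hasDerivAt_deriv_sqrt_comp
      (eventually_of_mem (hI.mem_nhds ht) hs1) (hs2 t ht) (hpos t ht)
  refine ⟨fun t ht => (hs1 t ht).sqrt (hpos t ht).ne',
    fun t ht => (hsecond t ht).differentiableAt, fun t ht => ?_⟩
  rw [(hsecond t ht).deriv]
  exact four_mul_sqrt_second_deriv_of_painleve (hpos t ht) (heq t ht)

theorem stmt_3 (I : Set ℝ) (hI : IsOpen I) (hI' : IsPreconnected I) (s : ℝ → ℝ)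
    (hs1 : ∀ t ∈ I, DifferentiableAt ℝ s t)
    (hs2 : ∀ t ∈ I, DifferentiableAt ℝ (deriv s) t)
    (hpos : ∀ t ∈ I, 0 < s t)
    (heq : ∀ t ∈ I, deriv (deriv s) t
      = (deriv s t) ^ 2 / (2 * s t) + (3 / 2) * (s t) ^ 3 + 4 * t * (s t) ^ 2 + 2 * t ^ 2 * s t) :
    (∀ t ∈ I, DifferentiableAt ℝ (fun u => Real.sqrt (s u)) t) ∧
    (∀ t ∈ I, DifferentiableAt ℝ (deriv (fun u => Real.sqrt (s u))) t) ∧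
    (∀ t ∈ I, 4 * deriv (deriv (fun u => Real.sqrt (s u))) t
      = Real.sqrt (s t) * (3 * (Real.sqrt (s t)) ^ 2 + 2 * t) * ((Real.sqrt (s t)) ^ 2 + 2 * t)) :=
  stmt_3_general I hI s hs1 hs2 hpos heq
end

section
/- Let σ : I → ℝ be twice differentiable on an open interval I, satisfying 4·σ''(t) = σ(t)·(3σ(t)² + 2t)·(σ(t)² + 2t) for all t ∈ I, and suppose σ(t) ≠ 0 for all t ∈ I. Then s := σ² is twice differentiable and satisfies s''(t) = s'(t)²/(2·s(t)) + (3/2)·s(t)³ + 4t·s(t)² + 2t²·s(t) for all t ∈ I. -/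
open Filter Topology

section SquareDerivatives

variable {𝕜 : Type*} [NontriviallyNormedField 𝕜] {σ : 𝕜 → 𝕜} {t : 𝕜}

theorem deriv_sq_apply (hσ : DifferentiableAt 𝕜 σ t) :
    deriv (fun u => σ u ^ 2) t = 2 * σ t * deriv σ t := by
  simpa [mul_comm, mul_assoc] using (hσ.hasDerivAt.fun_pow 2).deriv

theorem deriv_sq_eventuallyEq {I : Set 𝕜} (hI : IsOpen I)
    (hσ : ∀ u ∈ I, DifferentiableAt 𝕜 σ u) (ht : t ∈ I) :
    deriv (fun u => σ u ^ 2) =ᶠ[𝓝 t] fun u => 2 * σ u * deriv σ u := by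
  filter_upwards [hI.mem_nhds ht] with u hu using deriv_sq_apply (hσ u hu)

theorem hasDerivAt_deriv_sq {I : Set 𝕜} (hI : IsOpen I)
    (hσ : ∀ u ∈ I, DifferentiableAt 𝕜 σ u) (hσ' : DifferentiableAt 𝕜 (deriv σ) t)
    (ht : t ∈ I) :
    HasDerivAt (deriv (fun u => σ u ^ 2))
      (2 * deriv σ t ^ 2 + 2 * σ t * deriv (deriv σ) t) t := by
  have h := ((hσ t ht).hasDerivAt.const_mul (2 : 𝕜)).fun_mul hσ'.hasDerivAt
  exact (h.congr_of_eventuallyEq (deriv_sq_eventuallyEq hI hσ ht)).congr_deriv (by ring)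

end SquareDerivatives

-- Read with `x = σ t`, `p = σ' t`, `q = σ'' t`: then `s = x²`, `s' = 2xp` and `s'' = 2p² + 2xq`.
theorem painleveIV_identity_of_sqrt {K : Type*} [Field K] [CharZero K] {x p q t : K}
    (hx : x ≠ 0) (hq : 4 * q = x * (3 * x ^ 2 + 2 * t) * (x ^ 2 + 2 * t)) :
    2 * p ^ 2 + 2 * x * q = (2 * x * p) ^ 2 / (2 * x ^ 2)
      + (3 / 2) * (x ^ 2) ^ 3 + 4 * t * (x ^ 2) ^ 2 + 2 * t ^ 2 * x ^ 2 := by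
  field_simp
  linear_combination x * hq

theorem stmt_4_general (I : Set ℝ) (hI : IsOpen I) (σ : ℝ → ℝ)
    (hσ1 : ∀ t ∈ I, DifferentiableAt ℝ σ t)
    (hσ2 : ∀ t ∈ I, DifferentiableAt ℝ (deriv σ) t)
    (heq : ∀ t ∈ I, 4 * deriv (deriv σ) t
      = σ t * (3 * (σ t) ^ 2 + 2 * t) * ((σ t) ^ 2 + 2 * t))
    (hne : ∀ t ∈ I, σ t ≠ 0) :
    (∀ t ∈ I, DifferentiableAt ℝ (fun u => (σ u) ^ 2) t) ∧
    (∀ t ∈ I, DifferentiableAt ℝ (deriv (fun u => (σ u) ^ 2)) t) ∧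
    (∀ t ∈ I, deriv (deriv (fun u => (σ u) ^ 2)) t
      = (deriv (fun u => (σ u) ^ 2) t) ^ 2 / (2 * (σ t) ^ 2)
        + (3 / 2) * ((σ t) ^ 2) ^ 3 + 4 * t * ((σ t) ^ 2) ^ 2 + 2 * t ^ 2 * (σ t) ^ 2) := by
  have hs'' := fun t ht => hasDerivAt_deriv_sq hI hσ1 (hσ2 t ht) ht
  refine ⟨fun t ht => (hσ1 t ht).pow 2, fun t ht => (hs'' t ht).differentiableAt, ?_⟩
  intro t ht
  rw [(hs'' t ht).deriv, deriv_sq_apply (hσ1 t ht)]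
  exact painleveIV_identity_of_sqrt (hne t ht) (heq t ht)

theorem stmt_4 (I : Set ℝ) (hI : IsOpen I) (hI' : IsPreconnected I) (σ : ℝ → ℝ)
    (hσ1 : ∀ t ∈ I, DifferentiableAt ℝ σ t)
    (hσ2 : ∀ t ∈ I, DifferentiableAt ℝ (deriv σ) t)
    (heq : ∀ t ∈ I, 4 * deriv (deriv σ) t
      = σ t * (3 * (σ t) ^ 2 + 2 * t) * ((σ t) ^ 2 + 2 * t))
    (hne : ∀ t ∈ I, σ t ≠ 0) :
    (∀ t ∈ I, DifferentiableAt ℝ (fun u => (σ u) ^ 2) t) ∧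
    (∀ t ∈ I, DifferentiableAt ℝ (deriv (fun u => (σ u) ^ 2)) t) ∧
    (∀ t ∈ I, deriv (deriv (fun u => (σ u) ^ 2)) t
      = (deriv (fun u => (σ u) ^ 2) t) ^ 2 / (2 * (σ t) ^ 2)
        + (3 / 2) * ((σ t) ^ 2) ^ 3 + 4 * t * ((σ t) ^ 2) ^ 2 + 2 * t ^ 2 * (σ t) ^ 2) :=
  stmt_4_general I hI σ hσ1 hσ2 heq hne
end

section
/- Let s : I → ℝ be twice differentiable, satisfy the Painlevé IV equation (in the limit sense, i.e. 2·s·s'' − (s')² = s²·(3s + 2t)·(s + 2t)) on the open interval I, with s(t) > 0 for all t ∈ I \ {a} and s(a) = 0. Then the function √s : I → ℝ does NOT satisfy 4·σ'' = σ·(3σ² + 2t)·(σ² + 2t) on I. -/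
/-!
Write `σ = √s`. Since `σ ≥ 0` and `σ a = 0`, the point `a` is a minimum of `σ`, so `σ' a = 0`.
If `σ` solved `4σ'' = σ (3σ² + 2t)(σ² + 2t)`, it would solve the linear equation `σ'' = g σ`
with the continuous coefficient `g = (3σ² + 2t)(σ² + 2t)/4`. By Grönwall's inequality applied to
`(σ, σ')`, a solution of such an equation with zero Cauchy data at `a` vanishes on `[a, b]`,
contradicting `s > 0` away from `a`.
-/

open Set

theorem eqOn_zero_of_hasDerivAt_of_hasDerivAt_mul {u u' g : ℝ → ℝ} {a b C : ℝ}
    (hu : ∀ t ∈ Icc a b, HasDerivAt u (u' t) t)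
    (hu' : ∀ t ∈ Icc a b, HasDerivAt u' (g t * u t) t)
    (hg : ∀ t ∈ Icc a b, |g t| ≤ C) (ha : u a = 0) (ha' : u' a = 0) :
    EqOn u 0 (Icc a b) := by
  have hF : ∀ t ∈ Icc a b, HasDerivAt (fun x => (u x, u' x)) (u' t, g t * u t) t :=
    fun t ht => (hu t ht).prodMk (hu' t ht)
  have bound : ∀ t ∈ Ico a b, ‖(u' t, g t * u t)‖ ≤ max 1 C * ‖(u t, u' t)‖ := by
    intro t ht
    have hu_le : |u t| ≤ ‖(u t, u' t)‖ := le_max_left _ _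
    have hu'_le : |u' t| ≤ ‖(u t, u' t)‖ := le_max_right _ _
    have hC : |g t| ≤ max 1 C := (hg t (Ico_subset_Icc_self ht)).trans (le_max_right _ _)
    refine max_le ?_ ?_
    · exact hu'_le.trans (le_mul_of_one_le_left (norm_nonneg _) (le_max_left _ _))
    · simp only [Real.norm_eq_abs, abs_mul]
      exact mul_le_mul hC hu_le (abs_nonneg _) ((abs_nonneg _).trans hC)
  intro t ht
  have hzero := eq_zero_of_abs_deriv_le_mul_abs_self_of_eq_zero_right
    (fun x hx => (hF x hx).continuousAt.continuousWithinAt)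
    (fun x hx => (hF x (Ico_subset_Icc_self hx)).hasDerivWithinAt)
    (by simp [ha, ha']) bound t ht
  exact congrArg Prod.fst hzero

theorem stmt_8_general (I : Set ℝ) (hI : IsOpen I) (s : ℝ → ℝ) (a : ℝ) (ha : a ∈ I)
    (hpos : ∀ t ∈ I \ {a}, 0 < s t) (h0 : s a = 0) :
    ¬ ((∀ t ∈ I, DifferentiableAt ℝ (fun u => Real.sqrt (s u)) t) ∧
       (∀ t ∈ I, DifferentiableAt ℝ (deriv (fun u => Real.sqrt (s u))) t) ∧
       (∀ t ∈ I, 4 * deriv (deriv (fun u => Real.sqrt (s u))) t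
         = Real.sqrt (s t) * (3 * (Real.sqrt (s t)) ^ 2 + 2 * t)
           * ((Real.sqrt (s t)) ^ 2 + 2 * t))) := by
  rintro ⟨hd1, hd2, hode⟩
  set σ : ℝ → ℝ := fun u => Real.sqrt (s u)
  set g : ℝ → ℝ := fun t => (3 * σ t ^ 2 + 2 * t) * (σ t ^ 2 + 2 * t) / 4
  have hσa : σ a = 0 := by simp [σ, h0]
  have hσ'a : deriv σ a = 0 :=
    IsLocalMin.deriv_eq_zero (.of_forall fun x => hσa ▸ Real.sqrt_nonneg (s x))
  obtain ⟨b, hab, hbI⟩ := mem_nhdsGE_iff_exists_Icc_subset.mp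
    (mem_nhdsWithin_of_mem_nhds (hI.mem_nhds ha))
  have hgc : ContinuousOn g (Icc a b) := by
    have hσc : ContinuousOn σ (Icc a b) :=
      fun t ht => (hd1 t (hbI ht)).continuousAt.continuousWithinAt
    fun_prop
  obtain ⟨C, hC⟩ := isCompact_Icc.exists_bound_of_continuousOn hgc
  have hσ'' : ∀ t ∈ Icc a b, HasDerivAt (deriv σ) (g t * σ t) t := by
    intro t ht
    refine (hd2 t (hbI ht)).hasDerivAt.congr_deriv ?_
    simp only [g, σ]
    linear_combination hode t (hbI ht) / 4
  have hb : b ∈ Icc a b := right_mem_Icc.mpr hab.le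
  have hσb : σ b = 0 := eqOn_zero_of_hasDerivAt_of_hasDerivAt_mul
    (fun t ht => (hd1 t (hbI ht)).hasDerivAt) hσ'' hC hσa hσ'a hb
  exact (Real.sqrt_pos.mpr (hpos b ⟨hbI hb, hab.ne'⟩)).ne' hσb

theorem stmt_8 (I : Set ℝ) (hI : IsOpen I) (hI' : IsPreconnected I) (s : ℝ → ℝ) (a : ℝ) (ha : a ∈ I)
    (hs1 : ∀ t ∈ I, DifferentiableAt ℝ s t)
    (hs2 : ∀ t ∈ I, DifferentiableAt ℝ (deriv s) t)
    (heq : ∀ t ∈ I, 2 * s t * deriv (deriv s) t - (deriv s t) ^ 2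
      = (s t) ^ 2 * (3 * s t + 2 * t) * (s t + 2 * t))
    (hpos : ∀ t ∈ I \ {a}, 0 < s t) (h0 : s a = 0) :
    ¬ ((∀ t ∈ I, DifferentiableAt ℝ (fun u => Real.sqrt (s u)) t) ∧
       (∀ t ∈ I, DifferentiableAt ℝ (deriv (fun u => Real.sqrt (s u))) t) ∧
       (∀ t ∈ I, 4 * deriv (deriv (fun u => Real.sqrt (s u))) t
         = Real.sqrt (s t) * (3 * (Real.sqrt (s t)) ^ 2 + 2 * t)
           * ((Real.sqrt (s t)) ^ 2 + 2 * t))) :=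
  stmt_8_general I hI s a ha hpos h0
end

section
/- Let s : I → ℝ be twice differentiable with s(a) = 0, s > 0 on I \ {a}, satisfying 2·s·s'' − (s')² = s²·(3s + 2t)·(s + 2t) and s'' = (s')²/(2s) + (1/2)s(3s+2t)(s+2t) on I \ {a}. Define σ(t) := −√(s(t)) for t ≤ a and σ(t) := +√(s(t)) for t ≥ a. Then σ is twice differentiable on I and satisfies 4·σ''(t) = σ(t)·(3σ(t)² + 2t)·(σ(t)² + 2t) on all of I. -/
/-!
Away from `a`, `σ = ±√s` is differentiable with `σ' = s' / (2σ)`, and the equation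
`2 s s'' - s'² = s² ρ`, with `ρ = (3s + 2t)(s + 2t)`, becomes `σ'' = σ ρ / 4`. This right-hand side
is continuous across `a`, so on each side the fundamental theorem of calculus gives a limit `ℓ±` of
`σ'` at `a`, which is then the one-sided derivative of `σ` at `a`. Both limits are nonnegative
because `σ` has the sign of `t - a`, and `s'(t) / (t - a) = 2 (σ(t) / (t - a)) σ'(t)` tends to
`s''(a)` and to `2 ℓ±²`. Hence `ℓ₊ = ℓ₋ = √(s''(a) / 2)`: `σ` is differentiable at `a` with `σ'`
continuous there, and the same extension argument applied to `σ'` gives `σ''(a) = 0`.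
-/

open Set Filter Topology

section OneSidedLimits

variable {E : Type*} [NormedAddCommGroup E] [NormedSpace ℝ E] {f f' : ℝ → E} {a b : ℝ} {e : E}

theorem tendsto_slope_nhdsGT_of_tendsto_deriv (hf : ContinuousAt f a)
    (hdiff : ∀ᶠ x in 𝓝[>] a, DifferentiableAt ℝ f x)
    (h : Tendsto (deriv f) (𝓝[>] a) (𝓝 e)) : Tendsto (slope f a) (𝓝[>] a) (𝓝 e) := by
  have hderiv : HasDerivWithinAt f e (Ici a) a :=
    hasDerivWithinAt_Ici_of_tendsto_deriv (s := {x | DifferentiableAt ℝ f x})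
      (fun _ hx => hx.differentiableWithinAt) hf.continuousWithinAt hdiff h
  exact (hasDerivWithinAt_iff_tendsto_slope' self_notMem_Ioi).1 hderiv.Ioi_of_Ici

theorem tendsto_slope_nhdsLT_of_tendsto_deriv (hf : ContinuousAt f a)
    (hdiff : ∀ᶠ x in 𝓝[<] a, DifferentiableAt ℝ f x)
    (h : Tendsto (deriv f) (𝓝[<] a) (𝓝 e)) : Tendsto (slope f a) (𝓝[<] a) (𝓝 e) := by
  have hderiv : HasDerivWithinAt f e (Iic a) a :=
    hasDerivWithinAt_Iic_of_tendsto_deriv (s := {x | DifferentiableAt ℝ f x})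
      (fun _ hx => hx.differentiableWithinAt) hf.continuousWithinAt hdiff h
  exact (hasDerivWithinAt_iff_tendsto_slope' self_notMem_Iio).1 hderiv.Iio_of_Iic

theorem hasDerivAt_of_tendsto_deriv (hf : ContinuousAt f a)
    (hdiff : ∀ᶠ x in 𝓝[≠] a, DifferentiableAt ℝ f x)
    (h : Tendsto (deriv f) (𝓝[≠] a) (𝓝 e)) : HasDerivAt f e a := by
  rw [← nhdsLT_sup_nhdsGT, eventually_sup] at hdiff
  rw [← nhdsLT_sup_nhdsGT, tendsto_sup] at h
  rw [hasDerivAt_iff_tendsto_slope, ← nhdsLT_sup_nhdsGT]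
  exact tendsto_sup.2 ⟨tendsto_slope_nhdsLT_of_tendsto_deriv hf hdiff.1 h.1,
    tendsto_slope_nhdsGT_of_tendsto_deriv hf hdiff.2 h.2⟩

variable [CompleteSpace E]

theorem exists_continuousOn_Icc_eqOn_of_hasDerivAt (hab : a < b)
    (hf : ∀ x ∈ Ioo a b, HasDerivAt f (f' x) x) (hf' : ContinuousOn f' (Icc a b)) :
    ∃ g, ContinuousOn g (Icc a b) ∧ EqOn f g (Ioo a b) := by
  obtain ⟨c, hc⟩ := nonempty_Ioo.2 hab
  refine ⟨fun x => f c + ∫ y in c..x, f' y, ?_, fun x hx => ?_⟩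
  · have hprim := intervalIntegral.continuousOn_primitive_interval'
      (hf'.intervalIntegrable_of_Icc (μ := MeasureTheory.volume) hab.le)
      (Icc_subset_uIcc (Ioo_subset_Icc_self hc))
    rw [uIcc_of_le hab.le] at hprim
    exact continuousOn_const.add hprim
  · have hsub : uIcc c x ⊆ Ioo a b := ordConnected_Ioo.uIcc_subset hc hx
    dsimp only
    rw [intervalIntegral.integral_eq_sub_of_hasDerivAt (fun y hy => hf y (hsub hy))
      ((hf'.mono (hsub.trans Ioo_subset_Icc_self)).intervalIntegrable), add_sub_cancel]

theorem exists_tendsto_nhdsGT_of_hasDerivAt (hab : a < b)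
    (hf : ∀ x ∈ Ioo a b, HasDerivAt f (f' x) x) (hf' : ContinuousOn f' (Icc a b)) :
    ∃ ℓ, Tendsto f (𝓝[>] a) (𝓝 ℓ) := by
  obtain ⟨g, hg, hfg⟩ := exists_continuousOn_Icc_eqOn_of_hasDerivAt hab hf hf'
  have hga : Tendsto g (𝓝[Ioo a b] a) (𝓝 (g a)) :=
    (hg a (left_mem_Icc.2 hab.le)).mono Ioo_subset_Icc_self
  rw [nhdsWithin_Ioo_eq_nhdsGT hab] at hga
  exact ⟨g a, hga.congr' (eventuallyEq_of_mem (Ioo_mem_nhdsGT hab) hfg).symm⟩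

theorem exists_tendsto_nhdsLT_of_hasDerivAt (hab : a < b)
    (hf : ∀ x ∈ Ioo a b, HasDerivAt f (f' x) x) (hf' : ContinuousOn f' (Icc a b)) :
    ∃ ℓ, Tendsto f (𝓝[<] b) (𝓝 ℓ) := by
  obtain ⟨g, hg, hfg⟩ := exists_continuousOn_Icc_eqOn_of_hasDerivAt hab hf hf'
  have hgb : Tendsto g (𝓝[Ioo a b] b) (𝓝 (g b)) :=
    (hg b (right_mem_Icc.2 hab.le)).mono Ioo_subset_Icc_self
  rw [nhdsWithin_Ioo_eq_nhdsLT hab] at hgb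
  exact ⟨g b, hgb.congr' (eventuallyEq_of_mem (Ioo_mem_nhdsLT hab) hfg).symm⟩

end OneSidedLimits

noncomputable def signedSqrt (s : ℝ → ℝ) (a u : ℝ) : ℝ :=
  if u ≤ a then -√(s u) else √(s u)

section SignedSqrt

variable {s : ℝ → ℝ} {a t : ℝ}

theorem signedSqrt_sq (h : 0 ≤ s t) : signedSqrt s a t ^ 2 = s t := by
  unfold signedSqrt
  split_ifs <;> simp [h]

theorem signedSqrt_self (h : s a = 0) : signedSqrt s a a = 0 := by
  simp [signedSqrt, h]

theorem signedSqrt_ne_zero (h : 0 < s t) : signedSqrt s a t ≠ 0 := by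
  unfold signedSqrt
  split_ifs <;> simp [Real.sqrt_ne_zero'.2 h]

theorem continuousAt_signedSqrt_self (hs : ContinuousAt s a) (h : s a = 0) :
    ContinuousAt (signedSqrt s a) a := by
  have hnorm : ∀ u, ‖signedSqrt s a u‖ = √(s u) := fun u => by
    unfold signedSqrt
    split_ifs <;> simp
  rw [ContinuousAt, signedSqrt_self h]
  refine squeeze_zero_norm (fun u => (hnorm u).le) ?_
  simpa [h, Function.comp_def] using (Real.continuous_sqrt.tendsto (s a)).comp hs

theorem hasDerivAt_signedSqrt {s' : ℝ} (hta : t ≠ a) (hs : HasDerivAt s s' t) (hpos : 0 < s t) :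
    HasDerivAt (signedSqrt s a) (s' / (2 * signedSqrt s a t)) t := by
  have hsqrt : HasDerivAt (fun u => √(s u)) (s' / (2 * √(s t))) t := hs.sqrt hpos.ne'
  rcases hta.lt_or_gt with hlt | hgt
  · have heq : signedSqrt s a =ᶠ[𝓝 t] fun u => -√(s u) := by
      filter_upwards [Iio_mem_nhds hlt] with u (hu : u < a)
      simp [signedSqrt, hu.le]
    rw [heq.eq_of_nhds, mul_neg, div_neg]
    exact hsqrt.neg.congr_of_eventuallyEq heq
  · have heq : signedSqrt s a =ᶠ[𝓝 t] fun u => √(s u) := by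
      filter_upwards [Ioi_mem_nhds hgt] with u (hu : a < u)
      simp [signedSqrt, not_le.2 hu]
    rw [heq.eq_of_nhds]
    exact hsqrt.congr_of_eventuallyEq heq

theorem slope_signedSqrt_nonneg (h : s a = 0) (t : ℝ) : 0 ≤ slope (signedSqrt s a) a t := by
  rw [slope_def_field, signedSqrt_self h, sub_zero]
  unfold signedSqrt
  split_ifs with hta
  · exact div_nonneg_of_nonpos (neg_nonpos.2 (Real.sqrt_nonneg _)) (sub_nonpos.2 hta)
  · exact div_nonneg (Real.sqrt_nonneg _) (sub_nonneg.2 (not_le.1 hta).le)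

end SignedSqrt

section ODE

variable {s ρ : ℝ → ℝ} {a s₂ ℓ : ℝ} {I : Set ℝ}

theorem eq_sqrt_of_tendsto_slope_signedSqrt {l : Filter ℝ} [l.NeBot] (hl : l ≤ 𝓝[≠] a)
    (h0 : s a = 0) (hs₁ : deriv s a = 0) (hs₂ : HasDerivAt (deriv s) s₂ a)
    (hchain : ∀ᶠ t in l, deriv s t = 2 * signedSqrt s a t * deriv (signedSqrt s a) t)
    (hslope : Tendsto (slope (signedSqrt s a) a) l (𝓝 ℓ))
    (hderiv : Tendsto (deriv (signedSqrt s a)) l (𝓝 ℓ)) :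
    ℓ = √(s₂ / 2) := by
  have hℓ : 0 ≤ ℓ := ge_of_tendsto' hslope (slope_signedSqrt_nonneg h0)
  have hs₂' : Tendsto (slope (deriv s) a) l (𝓝 s₂) :=
    (hasDerivAt_iff_tendsto_slope.1 hs₂).mono_left hl
  have hprod : Tendsto (slope (deriv s) a) l (𝓝 (2 * ℓ * ℓ)) := by
    refine ((hslope.const_mul 2).mul hderiv).congr' ?_
    filter_upwards [hchain] with t ht
    rw [slope_def_field, slope_def_field, ht, hs₁, signedSqrt_self h0]
    ring
  rw [← tendsto_nhds_unique hprod hs₂', mul_assoc, mul_div_cancel_left₀ _ two_ne_zero,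
    Real.sqrt_mul_self hℓ]

theorem continuousAt_signedSqrt (hs : ∀ t ∈ I, DifferentiableAt ℝ s t) (h0 : s a = 0)
    (hpos : ∀ t ∈ I \ {a}, 0 < s t) {t : ℝ} (ht : t ∈ I) : ContinuousAt (signedSqrt s a) t := by
  rcases eq_or_ne t a with rfl | hta
  · exact continuousAt_signedSqrt_self (hs t ht).continuousAt h0
  · exact (hasDerivAt_signedSqrt hta (hs t ht).hasDerivAt (hpos t ⟨ht, hta⟩)).continuousAt

theorem hasDerivAt_deriv_signedSqrt_of_ne (hI : IsOpen I) (hs : ∀ t ∈ I, DifferentiableAt ℝ s t)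
    (hs' : ∀ t ∈ I, DifferentiableAt ℝ (deriv s) t) (hpos : ∀ t ∈ I \ {a}, 0 < s t)
    (hode : ∀ t ∈ I \ {a}, 2 * s t * deriv (deriv s) t - deriv s t ^ 2 = s t ^ 2 * ρ t)
    {t : ℝ} (ht : t ∈ I \ {a}) :
    HasDerivAt (deriv (signedSqrt s a)) (signedSqrt s a t * ρ t / 4) t := by
  set σ := signedSqrt s a
  have hσ : ∀ u ∈ I \ {a}, HasDerivAt σ (deriv s u / (2 * σ u)) u := fun u hu =>
    hasDerivAt_signedSqrt hu.2 (hs u hu.1).hasDerivAt (hpos u hu)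
  have hsq : σ t ^ 2 = s t := signedSqrt_sq (hpos t ht).le
  have hσt : σ t ≠ 0 := signedSqrt_ne_zero (hpos t ht)
  have hquot := (hs' t ht.1).hasDerivAt.div ((hσ t ht).const_mul 2) (mul_ne_zero two_ne_zero hσt)
  refine (hquot.congr_deriv ?_).congr_of_eventuallyEq ?_
  · have hode_t := hode t ht
    rw [← hsq] at hode_t
    field_simp
    linear_combination 4 * hode_t
  · filter_upwards [(hI.sdiff isClosed_singleton).mem_nhds ht] with u hu
    exact (hσ u hu).deriv

theorem exists_tendsto_deriv_signedSqrt_nhdsGT_nhdsLT (hI : IsOpen I) (ha : a ∈ I)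
    (hs : ∀ t ∈ I, DifferentiableAt ℝ s t) (hs' : ∀ t ∈ I, DifferentiableAt ℝ (deriv s) t)
    (h0 : s a = 0) (hpos : ∀ t ∈ I \ {a}, 0 < s t) (hρ : ContinuousOn ρ I)
    (hode : ∀ t ∈ I \ {a}, 2 * s t * deriv (deriv s) t - deriv s t ^ 2 = s t ^ 2 * ρ t) :
    (∃ ℓ, Tendsto (deriv (signedSqrt s a)) (𝓝[>] a) (𝓝 ℓ)) ∧
      ∃ ℓ, Tendsto (deriv (signedSqrt s a)) (𝓝[<] a) (𝓝 ℓ) := by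
  have hσ' : ∀ t ∈ I \ {a}, HasDerivAt (deriv (signedSqrt s a)) (signedSqrt s a t * ρ t / 4) t :=
    fun t ht => hasDerivAt_deriv_signedSqrt_of_ne hI hs hs' hpos hode ht
  have hσcont : ContinuousOn (signedSqrt s a) I := fun t ht =>
    (continuousAt_signedSqrt hs h0 hpos ht).continuousWithinAt
  have hF : ContinuousOn (fun t => signedSqrt s a t * ρ t / 4) I := (hσcont.mul hρ).div_const 4
  obtain ⟨p, q, -, hpq, hpqI⟩ := exists_Icc_mem_subset_of_mem_nhds (hI.mem_nhds ha)
  obtain ⟨hpa, haq⟩ := Icc_mem_nhds_iff.1 hpq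
  exact ⟨exists_tendsto_nhdsGT_of_hasDerivAt haq
      (fun t ht => hσ' t ⟨hpqI ⟨hpa.le.trans ht.1.le, ht.2.le⟩, ht.1.ne'⟩)
      (hF.mono ((Icc_subset_Icc_left hpa.le).trans hpqI)),
    exists_tendsto_nhdsLT_of_hasDerivAt hpa
      (fun t ht => hσ' t ⟨hpqI ⟨ht.1.le, ht.2.le.trans haq.le⟩, ht.2.ne⟩)
      (hF.mono ((Icc_subset_Icc_right haq.le).trans hpqI))⟩

theorem hasDerivAt_signedSqrt_self (hI : IsOpen I) (ha : a ∈ I)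
    (hs : ∀ t ∈ I, DifferentiableAt ℝ s t) (hs' : ∀ t ∈ I, DifferentiableAt ℝ (deriv s) t)
    (h0 : s a = 0) (hpos : ∀ t ∈ I \ {a}, 0 < s t) (hρ : ContinuousOn ρ I)
    (hode : ∀ t ∈ I \ {a}, 2 * s t * deriv (deriv s) t - deriv s t ^ 2 = s t ^ 2 * ρ t) :
    HasDerivAt (signedSqrt s a) √(deriv (deriv s) a / 2) a ∧
      Tendsto (deriv (signedSqrt s a)) (𝓝[≠] a) (𝓝 √(deriv (deriv s) a / 2)) := by
  set σ := signedSqrt s a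
  have hσ : ∀ t ∈ I \ {a}, HasDerivAt σ (deriv s t / (2 * σ t)) t := fun t ht =>
    hasDerivAt_signedSqrt ht.2 (hs t ht.1).hasDerivAt (hpos t ht)
  have hIa : I \ {a} ∈ 𝓝[≠] a := sdiff_mem_nhdsWithin_compl (hI.mem_nhds ha) _
  have hdiff : ∀ᶠ t in 𝓝[≠] a, DifferentiableAt ℝ σ t :=
    eventually_of_mem hIa fun t ht => (hσ t ht).differentiableAt
  have hchain : ∀ᶠ t in 𝓝[≠] a, deriv s t = 2 * σ t * deriv σ t := by
    filter_upwards [hIa] with t ht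
    have hσt : σ t ≠ 0 := signedSqrt_ne_zero (hpos t ht)
    rw [(hσ t ht).deriv]
    field_simp
  have hs₁ : deriv s a = 0 := by
    refine IsLocalMin.deriv_eq_zero ?_
    filter_upwards [hI.mem_nhds ha] with t ht
    rcases eq_or_ne t a with rfl | hta
    · exact le_rfl
    · exact h0 ▸ (hpos t ⟨ht, hta⟩).le
  have hs₂ := (hs' a ha).hasDerivAt
  have hσa := continuousAt_signedSqrt hs h0 hpos ha
  obtain ⟨⟨ℓr, hℓr⟩, ⟨ℓl, hℓl⟩⟩ :=
    exists_tendsto_deriv_signedSqrt_nhdsGT_nhdsLT hI ha hs hs' h0 hpos hρ hode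
  have hr : ℓr = √(deriv (deriv s) a / 2) :=
    eq_sqrt_of_tendsto_slope_signedSqrt (nhdsGT_le_nhdsNE a) h0 hs₁ hs₂
      (nhdsGT_le_nhdsNE a hchain)
      (tendsto_slope_nhdsGT_of_tendsto_deriv hσa (nhdsGT_le_nhdsNE a hdiff) hℓr) hℓr
  have hl : ℓl = √(deriv (deriv s) a / 2) :=
    eq_sqrt_of_tendsto_slope_signedSqrt (nhdsLT_le_nhdsNE a) h0 hs₁ hs₂
      (nhdsLT_le_nhdsNE a hchain)
      (tendsto_slope_nhdsLT_of_tendsto_deriv hσa (nhdsLT_le_nhdsNE a hdiff) hℓl) hℓl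
  have hlim : Tendsto (deriv σ) (𝓝[≠] a) (𝓝 √(deriv (deriv s) a / 2)) := by
    rw [← nhdsLT_sup_nhdsGT]
    exact tendsto_sup.2 ⟨hl ▸ hℓl, hr ▸ hℓr⟩
  exact ⟨hasDerivAt_of_tendsto_deriv hσa hdiff hlim, hlim⟩

theorem differentiableAt_signedSqrt (hI : IsOpen I) (ha : a ∈ I)
    (hs : ∀ t ∈ I, DifferentiableAt ℝ s t) (hs' : ∀ t ∈ I, DifferentiableAt ℝ (deriv s) t)
    (h0 : s a = 0) (hpos : ∀ t ∈ I \ {a}, 0 < s t) (hρ : ContinuousOn ρ I)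
    (hode : ∀ t ∈ I \ {a}, 2 * s t * deriv (deriv s) t - deriv s t ^ 2 = s t ^ 2 * ρ t)
    {t : ℝ} (ht : t ∈ I) : DifferentiableAt ℝ (signedSqrt s a) t := by
  rcases eq_or_ne a t with rfl | hta
  · exact (hasDerivAt_signedSqrt_self hI ha hs hs' h0 hpos hρ hode).1.differentiableAt
  · exact (hasDerivAt_signedSqrt hta.symm (hs t ht).hasDerivAt (hpos t ⟨ht, hta.symm⟩)).differentiableAt

theorem hasDerivAt_deriv_signedSqrt (hI : IsOpen I) (ha : a ∈ I)
    (hs : ∀ t ∈ I, DifferentiableAt ℝ s t) (hs' : ∀ t ∈ I, DifferentiableAt ℝ (deriv s) t)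
    (h0 : s a = 0) (hpos : ∀ t ∈ I \ {a}, 0 < s t) (hρ : ContinuousOn ρ I)
    (hode : ∀ t ∈ I \ {a}, 2 * s t * deriv (deriv s) t - deriv s t ^ 2 = s t ^ 2 * ρ t)
    {t : ℝ} (ht : t ∈ I) :
    HasDerivAt (deriv (signedSqrt s a)) (signedSqrt s a t * ρ t / 4) t := by
  rcases eq_or_ne a t with rfl | hta
  · obtain ⟨hσa, hlim⟩ := hasDerivAt_signedSqrt_self hI ha hs hs' h0 hpos hρ hode
    have hIa : I \ {a} ∈ 𝓝[≠] a := sdiff_mem_nhdsWithin_compl (hI.mem_nhds ha) _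
    have hσ'cont : ContinuousAt (deriv (signedSqrt s a)) a := by
      rw [← continuousWithinAt_compl_self, ContinuousWithinAt, hσa.deriv]
      exact hlim
    have hFcont : ContinuousAt (fun u => signedSqrt s a u * ρ u / 4) a :=
      ((continuousAt_signedSqrt hs h0 hpos ha).mul
        (hρ.continuousAt (hI.mem_nhds ha))).div_const 4
    refine hasDerivAt_of_tendsto_deriv hσ'cont ?_ ?_
    · exact eventually_of_mem hIa fun u hu =>
        (hasDerivAt_deriv_signedSqrt_of_ne hI hs hs' hpos hode hu).differentiableAt
    · refine (hFcont.tendsto.mono_left nhdsWithin_le_nhds).congr' ?_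
      filter_upwards [hIa] with u hu
      exact (hasDerivAt_deriv_signedSqrt_of_ne hI hs hs' hpos hode hu).deriv.symm
  · exact hasDerivAt_deriv_signedSqrt_of_ne hI hs hs' hpos hode ⟨ht, hta.symm⟩

end ODE

theorem stmt_9_general (I : Set ℝ) (hI : IsOpen I) (s : ℝ → ℝ) (a : ℝ) (ha : a ∈ I)
    (hs1 : ∀ t ∈ I, DifferentiableAt ℝ s t)
    (hs2 : ∀ t ∈ I, DifferentiableAt ℝ (deriv s) t)
    (h0 : s a = 0) (hpos : ∀ t ∈ I \ {a}, 0 < s t)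
    (heq1 : ∀ t ∈ I \ {a}, 2 * s t * deriv (deriv s) t - (deriv s t) ^ 2
      = (s t) ^ 2 * (3 * s t + 2 * t) * (s t + 2 * t)) :
    (∀ t ∈ I, DifferentiableAt ℝ
      (fun u => if u ≤ a then -Real.sqrt (s u) else Real.sqrt (s u)) t) ∧
    (∀ t ∈ I, DifferentiableAt ℝ
      (deriv (fun u => if u ≤ a then -Real.sqrt (s u) else Real.sqrt (s u))) t) ∧
    (∀ t ∈ I, 4 * deriv (deriv (fun u => if u ≤ a then -Real.sqrt (s u) else Real.sqrt (s u))) t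
      = (if t ≤ a then -Real.sqrt (s t) else Real.sqrt (s t))
        * (3 * (if t ≤ a then -Real.sqrt (s t) else Real.sqrt (s t)) ^ 2 + 2 * t)
        * ((if t ≤ a then -Real.sqrt (s t) else Real.sqrt (s t)) ^ 2 + 2 * t)) := by
  set ρ : ℝ → ℝ := fun t => (3 * s t + 2 * t) * (s t + 2 * t)
  have hscont : ContinuousOn s I := fun t ht => (hs1 t ht).continuousAt.continuousWithinAt
  have hρ : ContinuousOn ρ I := by fun_prop
  have hode : ∀ t ∈ I \ {a}, 2 * s t * deriv (deriv s) t - deriv s t ^ 2 = s t ^ 2 * ρ t :=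
    fun t ht => (heq1 t ht).trans (by ring)
  have hσ'' := fun t (ht : t ∈ I) => hasDerivAt_deriv_signedSqrt hI ha hs1 hs2 h0 hpos hρ hode ht
  refine ⟨fun t ht => differentiableAt_signedSqrt hI ha hs1 hs2 h0 hpos hρ hode ht,
    fun t ht => (hσ'' t ht).differentiableAt, fun t ht => ?_⟩
  have hsq : signedSqrt s a t ^ 2 = s t := by
    refine signedSqrt_sq ?_
    rcases eq_or_ne t a with rfl | hta
    · exact h0.ge
    · exact (hpos t ⟨ht, hta⟩).le
  change 4 * deriv (deriv (signedSqrt s a)) t = signedSqrt s a t *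
    (3 * signedSqrt s a t ^ 2 + 2 * t) * (signedSqrt s a t ^ 2 + 2 * t)
  rw [(hσ'' t ht).deriv, hsq]
  ring

theorem stmt_9 (I : Set ℝ) (hI : IsOpen I) (hI' : IsPreconnected I) (s : ℝ → ℝ) (a : ℝ) (ha : a ∈ I)
    (hs1 : ∀ t ∈ I, DifferentiableAt ℝ s t)
    (hs2 : ∀ t ∈ I, DifferentiableAt ℝ (deriv s) t)
    (h0 : s a = 0) (hpos : ∀ t ∈ I \ {a}, 0 < s t)
    (heq1 : ∀ t ∈ I \ {a}, 2 * s t * deriv (deriv s) t - (deriv s t) ^ 2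
      = (s t) ^ 2 * (3 * s t + 2 * t) * (s t + 2 * t))
    (heq2 : ∀ t ∈ I \ {a}, deriv (deriv s) t
      = (deriv s t) ^ 2 / (2 * s t)
        + (1 / 2) * s t * (3 * s t + 2 * t) * (s t + 2 * t)) :
    (∀ t ∈ I, DifferentiableAt ℝ
      (fun u => if u ≤ a then -Real.sqrt (s u) else Real.sqrt (s u)) t) ∧
    (∀ t ∈ I, DifferentiableAt ℝ
      (deriv (fun u => if u ≤ a then -Real.sqrt (s u) else Real.sqrt (s u))) t) ∧
    (∀ t ∈ I, 4 * deriv (deriv (fun u => if u ≤ a then -Real.sqrt (s u) else Real.sqrt (s u))) t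
      = (if t ≤ a then -Real.sqrt (s t) else Real.sqrt (s t))
        * (3 * (if t ≤ a then -Real.sqrt (s t) else Real.sqrt (s t)) ^ 2 + 2 * t)
        * ((if t ≤ a then -Real.sqrt (s t) else Real.sqrt (s t)) ^ 2 + 2 * t)) :=
  stmt_9_general I hI s a ha hs1 hs2 h0 hpos heq1
end

section
/- Let σ : I → ℝ be twice differentiable, satisfy 4·σ''(t) = σ(t)·(3σ(t)² + 2t)·(σ(t)² + 2t) on the open interval I ∋ a, with σ < 0 on I ∩ (−∞, a), σ(a) = 0, and σ > 0 on I ∩ (a, ∞). Then s := σ² satisfies the Painlevé IV equation on I, in the sense that 2·s·s'' − (s')² = s²·(3s + 2t)·(s + 2t) on I and the ratio (s')²/(2s) extends continuously across a with limit 2·σ'(a)², so that s''(a) = lim_{t→a} [(s')²/(2s)](t) + (1/2)s(a)(3s(a)+2a)(s(a)+2a). -/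
/-! With `s = σ²` one has `s' = 2σσ'` and `s'' = 2σ'² + 2σσ''`, so `2ss'' - s'² = 4σ³σ''`, which
the equation for `σ` turns into the right-hand side of Painlevé IV. Away from the zero `a` of `σ`
the singular term is `(s')²/(2s) = 2σ'²`, which is continuous through `a`. -/

open Filter Topology

section Square

variable {𝕜 : Type*} [NontriviallyNormedField 𝕜] {f : 𝕜 → 𝕜} {x : 𝕜}

theorem deriv_fun_sq (hf : DifferentiableAt 𝕜 f x) :
    deriv (fun v => f v ^ 2) x = 2 * f x * deriv f x := by
  rw [deriv_fun_pow hf]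
  norm_num

theorem deriv_deriv_fun_sq {U : Set 𝕜} (hU : IsOpen U) (hf : ∀ y ∈ U, DifferentiableAt 𝕜 f y)
    (hx : x ∈ U) (hf' : DifferentiableAt 𝕜 (deriv f) x) :
    deriv (deriv fun v => f v ^ 2) x = 2 * deriv f x ^ 2 + 2 * f x * deriv (deriv f) x := by
  have hloc : deriv (fun v => f v ^ 2) =ᶠ[𝓝 x] fun v => 2 * f v * deriv f v :=
    eventually_of_mem (hU.mem_nhds hx) fun y hy => deriv_fun_sq (hf y hy)
  rw [hloc.deriv_eq, (((hf x hx).hasDerivAt.const_mul 2).fun_mul hf'.hasDerivAt).deriv]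
  ring

end Square

theorem tendsto_deriv_fun_sq_sq_div {f : ℝ → ℝ} {a : ℝ} {l : Filter ℝ} (hl : l ≤ 𝓝 a)
    (hf : ∀ᶠ x in l, DifferentiableAt ℝ f x ∧ f x ≠ 0) (hf' : ContinuousAt (deriv f) a) :
    Tendsto (fun x => deriv (fun v => f v ^ 2) x ^ 2 / (2 * f x ^ 2)) l
      (𝓝 (2 * deriv f a ^ 2)) := by
  refine (((hf'.fun_pow 2).const_mul 2).tendsto.mono_left hl).congr' ?_
  filter_upwards [hf] with x ⟨hdx, hx⟩
  rw [deriv_fun_sq hdx]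
  field_simp

theorem stmt_11_general (I : Set ℝ) (hI : IsOpen I) (σ : ℝ → ℝ) (a : ℝ)
    (ha : a ∈ I)
    (hσ1 : ∀ t ∈ I, DifferentiableAt ℝ σ t)
    (hσ2 : ∀ t ∈ I, DifferentiableAt ℝ (deriv σ) t)
    (heq : ∀ t ∈ I, 4 * deriv (deriv σ) t
      = σ t * (3 * (σ t) ^ 2 + 2 * t) * ((σ t) ^ 2 + 2 * t))
    (hneg : ∀ t ∈ I, t < a → σ t < 0) (h0 : σ a = 0)
    (hpos : ∀ t ∈ I, a < t → 0 < σ t) :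
    (∀ t ∈ I, 2 * (σ t) ^ 2 * deriv (deriv (fun v => (σ v) ^ 2)) t
        - (deriv (fun v => (σ v) ^ 2) t) ^ 2
      = ((σ t) ^ 2) ^ 2 * (3 * (σ t) ^ 2 + 2 * t) * ((σ t) ^ 2 + 2 * t)) ∧
    Filter.Tendsto (fun u => (deriv (fun v => (σ v) ^ 2) u) ^ 2 / (2 * (σ u) ^ 2))
      (nhdsWithin a (I \ {a})) (nhds (2 * (deriv σ a) ^ 2)) ∧
    deriv (deriv (fun v => (σ v) ^ 2)) a
      = 2 * (deriv σ a) ^ 2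
        + (1 / 2) * (σ a) ^ 2 * (3 * (σ a) ^ 2 + 2 * a) * ((σ a) ^ 2 + 2 * a) := by
  have hs'' : ∀ t ∈ I, deriv (deriv fun v => σ v ^ 2) t
      = 2 * deriv σ t ^ 2 + 2 * σ t * deriv (deriv σ) t :=
    fun t ht => deriv_deriv_fun_sq hI hσ1 ht (hσ2 t ht)
  have hσ_ne : ∀ t ∈ I \ {a}, σ t ≠ 0 := by
    rintro t ⟨ht, hta : t ≠ a⟩
    rcases hta.lt_or_gt with h | h
    · exact (hneg t ht h).ne
    · exact (hpos t ht h).ne'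
  refine ⟨fun t ht => ?_, ?_, ?_⟩
  · rw [deriv_fun_sq (hσ1 t ht), hs'' t ht]
    linear_combination σ t ^ 3 * heq t ht
  · refine tendsto_deriv_fun_sq_sq_div nhdsWithin_le_nhds ?_ (hσ2 a ha).continuousAt
    filter_upwards [self_mem_nhdsWithin] with t ht
    exact ⟨hσ1 t ht.1, hσ_ne t ht⟩
  · rw [hs'' a ha, h0]
    ring

theorem stmt_11 (I : Set ℝ) (hI : IsOpen I) (hI' : IsPreconnected I) (σ : ℝ → ℝ) (a : ℝ)
    (ha : a ∈ I)
    (hσ1 : ∀ t ∈ I, DifferentiableAt ℝ σ t)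
    (hσ2 : ∀ t ∈ I, DifferentiableAt ℝ (deriv σ) t)
    (heq : ∀ t ∈ I, 4 * deriv (deriv σ) t
      = σ t * (3 * (σ t) ^ 2 + 2 * t) * ((σ t) ^ 2 + 2 * t))
    (hneg : ∀ t ∈ I, t < a → σ t < 0) (h0 : σ a = 0)
    (hpos : ∀ t ∈ I, a < t → 0 < σ t) :
    (∀ t ∈ I, 2 * (σ t) ^ 2 * deriv (deriv (fun v => (σ v) ^ 2)) t
        - (deriv (fun v => (σ v) ^ 2) t) ^ 2
      = ((σ t) ^ 2) ^ 2 * (3 * (σ t) ^ 2 + 2 * t) * ((σ t) ^ 2 + 2 * t)) ∧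
    Filter.Tendsto (fun u => (deriv (fun v => (σ v) ^ 2) u) ^ 2 / (2 * (σ u) ^ 2))
      (nhdsWithin a (I \ {a})) (nhds (2 * (deriv σ a) ^ 2)) ∧
    deriv (deriv (fun v => (σ v) ^ 2)) a
      = 2 * (deriv σ a) ^ 2
        + (1 / 2) * (σ a) ^ 2 * (3 * (σ a) ^ 2 + 2 * a) * ((σ a) ^ 2 + 2 * a) :=
  stmt_11_general I hI σ a ha hσ1 hσ2 heq hneg h0 hpos
end

section
/- Let s : I → ℝ be infinitely differentiable on an open interval I ∋ a, satisfying 2·s·s'' − (s')² = s²·Q on I, where Q(t) = (3s(t) + 2t)·(s(t) + 2t). If s(a) = 0 and s''(a) = 0, then the identity 2·s''' = 2·s'·Q + s·Q' holds throughout I. -/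
theorem stmt_13 (I : Set ℝ) (hI : IsOpen I) (hI' : IsPreconnected I) (s : ℝ → ℝ) (a : ℝ)
    (ha : a ∈ I) (hs : ContDiffOn ℝ (⊤ : ℕ∞) s I)
    (heq : ∀ t ∈ I, 2 * s t * deriv (deriv s) t - (deriv s t) ^ 2
      = (s t) ^ 2 * ((3 * s t + 2 * t) * (s t + 2 * t)))
    (h0 : s a = 0) (h2 : deriv (deriv s) a = 0) :
    ∀ t ∈ I, 2 * deriv (deriv (deriv s)) t
      = 2 * deriv s t * ((3 * s t + 2 * t) * (s t + 2 * t))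
        + s t * deriv (fun u => (3 * s u + 2 * u) * (s u + 2 * u)) t := by
  set Q : ℝ → ℝ := fun u => (3 * s u + 2 * u) * (s u + 2 * u) with hQdef
  have hs1 : ContDiffOn ℝ (⊤ : ℕ∞) (deriv s) I := hs.deriv_of_isOpen hI (by simp)
  have hs2 : ContDiffOn ℝ (⊤ : ℕ∞) (deriv (deriv s)) I := hs1.deriv_of_isOpen hI (by simp)
  have hs3 : ContDiffOn ℝ (⊤ : ℕ∞) (deriv (deriv (deriv s))) I := hs2.deriv_of_isOpen hI (by simp)
  have hds : ∀ t ∈ I, HasDerivAt s (deriv s t) t := fun t ht =>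
    ((hs.differentiableOn (by simp)).differentiableAt (hI.mem_nhds ht)).hasDerivAt
  have hds1 : ∀ t ∈ I, HasDerivAt (deriv s) (deriv (deriv s) t) t := fun t ht =>
    ((hs1.differentiableOn (by simp)).differentiableAt (hI.mem_nhds ht)).hasDerivAt
  have hds2 : ∀ t ∈ I, HasDerivAt (deriv (deriv s)) (deriv (deriv (deriv s)) t) t := fun t ht =>
    ((hs2.differentiableOn (by simp)).differentiableAt (hI.mem_nhds ht)).hasDerivAt
  -- derivative of Q on I
  have hQ' : ∀ t ∈ I, HasDerivAt Q
      ((3 * deriv s t + 2) * (s t + 2 * t) + (3 * s t + 2 * t) * (deriv s t + 2)) t := by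
    intro t ht
    have h1 : HasDerivAt (fun u => 3 * s u + 2 * u) (3 * deriv s t + 2) t := by
      exact (((hds t ht).const_mul 3).add ((hasDerivAt_id t).const_mul 2)).congr_deriv (by norm_num)
    have h2 : HasDerivAt (fun u => s u + 2 * u) (deriv s t + 2) t := by
      exact ((hds t ht).add ((hasDerivAt_id t).const_mul 2)).congr_deriv (by norm_num)
    exact h1.mul h2
  have hQd : ∀ t ∈ I, deriv Q t
      = (3 * deriv s t + 2) * (s t + 2 * t) + (3 * s t + 2 * t) * (deriv s t + 2) :=
    fun t ht => (hQ' t ht).deriv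
  -- key algebraic identity: s * (2 s''' - (2 s' Q + s Q')) = 0 on I
  have key : ∀ t ∈ I, s t * (2 * deriv (deriv (deriv s)) t
      - (2 * deriv s t * Q t + s t * deriv Q t)) = 0 := by
    intro t ht
    have hF : HasDerivAt (fun u => 2 * s u * deriv (deriv s) u - (deriv s u) ^ 2)
        ((2 * deriv s t) * deriv (deriv s) t + (2 * s t) * deriv (deriv (deriv s)) t
          - 2 * deriv s t ^ 1 * deriv (deriv s) t) t := by
      exact (((hds t ht).const_mul 2).mul (hds2 t ht)).sub ((hds1 t ht).pow 2)
    have hG : HasDerivAt (fun u => (s u) ^ 2 * Q u)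
        ((2 * s t ^ 1 * deriv s t) * Q t + (s t) ^ 2 * deriv Q t) t := by
      have := ((hds t ht).pow 2).mul ((hQ' t ht).congr_deriv (hQd t ht).symm)
      exact this.congr_deriv (by norm_num)
    have hEq : (fun u => (s u) ^ 2 * Q u)
        =ᶠ[nhds t] (fun u => 2 * s u * deriv (deriv s) u - (deriv s u) ^ 2) := by
      filter_upwards [hI.mem_nhds ht] with u hu
      exact (heq u hu).symm
    have hF' : HasDerivAt (fun u => (s u) ^ 2 * Q u)
        ((2 * deriv s t) * deriv (deriv s) t + (2 * s t) * deriv (deriv (deriv s)) t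
          - 2 * deriv s t ^ 1 * deriv (deriv s) t) t := hF.congr_of_eventuallyEq hEq
    have := hG.unique hF'
    nlinarith [this]
  -- the residual function and its continuity on I
  set g : ℝ → ℝ := fun u => 2 * deriv (deriv (deriv s)) u
      - (2 * deriv s u * Q u
        + s u * ((3 * deriv s u + 2) * (s u + 2 * u) + (3 * s u + 2 * u) * (deriv s u + 2)))
    with hgdef
  have hcs : ContinuousOn s I := hs.continuousOn
  have hcs1 : ContinuousOn (deriv s) I := hs1.continuousOn
  have hcs3 : ContinuousOn (deriv (deriv (deriv s))) I := hs3.continuousOn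
  have hcg : ContinuousOn g I := by
    apply ContinuousOn.sub
    · exact hcs3.const_smul 2 |>.congr (fun x _ => by simp [smul_eq_mul])
    · apply ContinuousOn.add
      · exact ((continuousOn_const.mul hcs1).mul
          ((continuousOn_const.mul hcs).add (continuousOn_const.mul continuousOn_id)
            |>.mul (hcs.add (continuousOn_const.mul continuousOn_id))))
      · exact hcs.mul (((continuousOn_const.mul hcs1).add continuousOn_const).mul
          (hcs.add (continuousOn_const.mul continuousOn_id)) |>.add
          (((continuousOn_const.mul hcs).add (continuousOn_const.mul continuousOn_id)).mul
            (hcs1.add continuousOn_const)))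
  have keyg : ∀ t ∈ I, s t * g t = 0 := by
    intro t ht
    have := key t ht
    rw [hQd t ht] at this
    simpa [hgdef] using this
  -- g vanishes on I
  have hg0 : ∀ t ∈ I, g t = 0 := by
    intro t ht
    by_cases hz : s t = 0
    · by_cases hloc : ∀ᶠ u in nhds t, s u = 0
      · have e0 : s =ᶠ[nhds t] (fun _ => (0 : ℝ)) := hloc
        have e1 : deriv s =ᶠ[nhds t] (fun _ => (0 : ℝ)) := by
          simpa [deriv_const'] using e0.deriv
        have e2 : deriv (deriv s) =ᶠ[nhds t] (fun _ => (0 : ℝ)) := by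
          simpa [deriv_const'] using e1.deriv
        have e3 : deriv (deriv (deriv s)) =ᶠ[nhds t] (fun _ => (0 : ℝ)) := by
          simpa [deriv_const'] using e2.deriv
        have h1 : deriv s t = 0 := e1.self_of_nhds
        have h3 : deriv (deriv (deriv s)) t = 0 := e3.self_of_nhds
        simp [hgdef, hz, h1, h3]
      · -- t is a limit of points where s ≠ 0
        set S : Set ℝ := {u | s u ≠ 0} ∩ I with hSdef
        have hfreq : ∃ᶠ u in nhds t, u ∈ S := by
          have h1 : ∃ᶠ u in nhds t, s u ≠ 0 := Filter.not_eventually.mp hloc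
          exact h1.and_eventually (hI.eventually_mem ht)
        have hne : (nhdsWithin t S).NeBot :=
          mem_closure_iff_nhdsWithin_neBot.mp (mem_closure_iff_frequently.mpr hfreq)
        have hten1 : Filter.Tendsto g (nhdsWithin t S) (nhds (g t)) :=
          ((hcg.continuousAt (hI.mem_nhds ht)).continuousWithinAt).tendsto
        have hten2 : Filter.Tendsto g (nhdsWithin t S) (nhds 0) := by
          apply Filter.Tendsto.congr' _ tendsto_const_nhds
          filter_upwards [self_mem_nhdsWithin] with u hu
          have hu1 : s u ≠ 0 := hu.1
          have := keyg u hu.2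
          exact (mul_eq_zero.mp this).resolve_left hu1 |>.symm
        exact tendsto_nhds_unique hten1 hten2
    · have := keyg t ht
      exact (mul_eq_zero.mp this).resolve_left hz
  intro t ht
  have := hg0 t ht
  rw [hQd t ht]
  simp only [hgdef] at this
  have hQt : Q t = (3 * s t + 2 * t) * (s t + 2 * t) := rfl
  rw [hQt] at this
  linarith
end

section
/- Let s : I → ℝ be real analytic on an open interval I ∋ a, satisfying 2·s·s'' − (s')² = s²·(3s + 2t)·(s + 2t) on I, with s(a) = 0 and s''(a) = 0. Then s is identically zero on I. -/
/-!
Differentiating the equation gives `s * (2 s''' - 2 s' Q - s Q') = 0` on `I`, where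
`Q t = (3 s t + 2 t) (s t + 2 t)`. Both factors are analytic on the connected set `I`, so either
`s ≡ 0` or `s` solves the linear equation `s''' = (Q' / 2) s + Q s'`. At `a` the original equation
reduces to `s'(a)^2 = 0`, so `s` vanishes to order `3` at `a`. An analytic solution of a linear
equation of order `m` vanishing to order `m` at a point has infinite order there: were its order
`n` finite, `s^(m)` would have order `n - m` while the right-hand side has order at least
`n - m + 1`. Hence `s` vanishes near `a`, and on `I` by the identity theorem.
-/

open Filter Finset
open scoped Topology

section Order

variable {𝕜 E : Type*} [NontriviallyNormedField 𝕜] [NormedAddCommGroup E] [NormedSpace 𝕜 E]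
  {z₀ : 𝕜}

theorem le_analyticOrderAt_sum {ι : Type*} (s : Finset ι) (F : ι → 𝕜 → E) {k : ℕ∞}
    (h : ∀ i ∈ s, k ≤ analyticOrderAt (F i) z₀) : k ≤ analyticOrderAt (∑ i ∈ s, F i) z₀ := by
  classical
  induction s using Finset.induction_on with
  | empty =>
    rw [sum_empty, analyticOrderAt_eq_top.mpr (Eventually.of_forall fun _ => Pi.zero_apply _)]
    exact le_top
  | insert i s hi ih =>
    rw [sum_insert hi]
    exact (le_min (h i (mem_insert_self i s))
      (ih fun j hj => h j (mem_insert_of_mem hj))).trans le_analyticOrderAt_add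

variable [CharZero 𝕜] [CompleteSpace E]

theorem AnalyticAt.analyticOrderAt_iteratedDeriv {f : 𝕜 → E} (hf : AnalyticAt 𝕜 f z₀)
    {n k : ℕ} (hn : analyticOrderAt f z₀ = n) (hk : k ≤ n) :
    analyticOrderAt (iteratedDeriv k f) z₀ = (n - k : ℕ) := by
  rcases Nat.eq_zero_or_pos n with rfl | hpos
  · obtain rfl : k = 0 := by omega
    simpa using hn
  rw [iteratedDeriv_eq_iterate]
  exact analyticOrderAt_iterated_deriv hf hn.symm hpos.ne' hk

theorem AnalyticAt.eventuallyEq_zero_of_linear_ode {f : 𝕜 → E} {m : ℕ} {c : Fin m → 𝕜 → 𝕜}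
    (hf : AnalyticAt 𝕜 f z₀) (hc : ∀ j, AnalyticAt 𝕜 (c j) z₀)
    (hode : iteratedDeriv m f =ᶠ[𝓝 z₀] ∑ j, c j • iteratedDeriv j f)
    (hinit : ∀ j < m, iteratedDeriv j f z₀ = 0) : f =ᶠ[𝓝 z₀] 0 := by
  suffices analyticOrderAt f z₀ = ⊤ from analyticOrderAt_eq_top.mp this
  by_contra hfin
  obtain ⟨n, hn⟩ := ENat.ne_top_iff_exists.mp hfin
  have hmn : m ≤ n := by
    exact_mod_cast hn ▸ (natCast_le_analyticOrderAt_iff_iteratedDeriv_eq_zero hf).mpr hinit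
  have hrhs : ((n - m + 1 : ℕ) : ℕ∞) ≤ analyticOrderAt (∑ j, c j • iteratedDeriv j f) z₀ := by
    refine le_analyticOrderAt_sum _ _ fun j _ => ?_
    have hj : AnalyticAt 𝕜 (iteratedDeriv j f) z₀ := by
      rw [iteratedDeriv_eq_iterate]; exact hf.iterated_deriv j
    rw [analyticOrderAt_smul (hc j) hj,
      hf.analyticOrderAt_iteratedDeriv hn.symm (j.2.le.trans hmn)]
    exact le_add_left (by norm_cast; omega)
  rw [← analyticOrderAt_congr hode, hf.analyticOrderAt_iteratedDeriv hn.symm hmn] at hrhs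
  norm_cast at hrhs
  omega

end Order

section DerivedEquation

variable {𝕜 : Type*} [NontriviallyNormedField 𝕜] [CompleteSpace 𝕜]

theorem AnalyticAt.hasDerivAt_two_mul_mul_deriv_deriv_sub_sq {s : 𝕜 → 𝕜} {t : 𝕜}
    (hs : AnalyticAt 𝕜 s t) :
    HasDerivAt (fun u => 2 * s u * deriv (deriv s) u - deriv s u ^ 2)
      (2 * s t * deriv (deriv (deriv s)) t) t := by
  have h0 := hs.differentiableAt.hasDerivAt
  have h1 := hs.deriv.differentiableAt.hasDerivAt
  have h2 := hs.deriv.deriv.differentiableAt.hasDerivAt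
  exact (((h0.const_mul 2).fun_mul h2).fun_sub (h1.fun_pow 2)).congr_deriv (by push_cast; ring)

theorem AnalyticOnNhd.mul_two_mul_deriv_deriv_deriv_sub_eq_zero {U : Set 𝕜} (hU : IsOpen U)
    {s Q : 𝕜 → 𝕜} (hs : AnalyticOnNhd 𝕜 s U) (hQ : DifferentiableOn 𝕜 Q U)
    (heq : ∀ t ∈ U, 2 * s t * deriv (deriv s) t - deriv s t ^ 2 = s t ^ 2 * Q t) :
    ∀ t ∈ U, s t * (2 * deriv (deriv (deriv s)) t - 2 * deriv s t * Q t - s t * deriv Q t) = 0 := by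
  intro t ht
  have hrhs : HasDerivAt (fun u => s u ^ 2 * Q u)
      (2 * s t * deriv s t * Q t + s t ^ 2 * deriv Q t) t :=
    (((hs t ht).differentiableAt.hasDerivAt.fun_pow 2).fun_mul
      (hQ.differentiableAt (hU.mem_nhds ht)).hasDerivAt).congr_deriv (by push_cast; ring)
  have hlhs := (hs t ht).hasDerivAt_two_mul_mul_deriv_deriv_sub_sq.congr_of_eventuallyEq
    (eventually_of_mem (hU.mem_nhds ht) fun u hu => (heq u hu).symm)
  linear_combination hlhs.unique hrhs

end DerivedEquation

theorem stmt_14 (I : Set ℝ) (hI : IsOpen I) (hI' : IsPreconnected I) (s : ℝ → ℝ) (a : ℝ)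
    (ha : a ∈ I) (hs : AnalyticOnNhd ℝ s I)
    (heq : ∀ t ∈ I, 2 * s t * deriv (deriv s) t - (deriv s t) ^ 2
      = (s t) ^ 2 * (3 * s t + 2 * t) * (s t + 2 * t))
    (h0 : s a = 0) (h2 : deriv (deriv s) a = 0) :
    ∀ t ∈ I, s t = 0 := by
  set Q : ℝ → ℝ := fun t => (3 * s t + 2 * t) * (s t + 2 * t)
  have hQ : AnalyticOnNhd ℝ Q I := fun t ht => by have := hs t ht; fun_prop
  have h1 : deriv s a = 0 := by
    have := heq a ha
    rw [h0, h2] at this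
    exact pow_eq_zero_iff two_ne_zero |>.mp (by linarith)
  have hmul := hs.mul_two_mul_deriv_deriv_deriv_sub_eq_zero hI hQ.differentiableOn
    fun t ht => by rw [heq t ht]; ring
  have hw : AnalyticOnNhd ℝ
      (fun t => 2 * deriv (deriv (deriv s)) t - 2 * deriv s t * Q t - s t * deriv Q t) I :=
    fun t ht => by have := hs t ht; have := hQ t ht; fun_prop
  rcases hs.eq_zero_or_eq_zero_of_mul_eq_zero hw hmul hI' with hs0 | hw0
  · exact hs0
  have hode : iteratedDeriv 3 s =ᶠ[𝓝 a]
      ∑ j, ![fun t => deriv Q t / 2, Q, 0] j • iteratedDeriv j s := by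
    filter_upwards [hI.mem_nhds ha] with t ht
    have := hw0 t ht
    simp only [iteratedDeriv_succ, iteratedDeriv_zero, smul_eq_mul,
      Finset.sum_apply, Pi.mul_apply, Matrix.cons_val', Pi.zero_apply, Matrix.cons_val_fin_one,
      Fin.sum_univ_three, Fin.isValue, Matrix.cons_val_zero, Fin.coe_ofNat_eq_mod, Nat.zero_mod,
      Matrix.cons_val_one, Nat.one_mod, Matrix.cons_val, Nat.mod_succ, zero_mul, add_zero]
    linear_combination this / 2
  have hloc : s =ᶠ[𝓝 a] 0 := by
    refine (hs a ha).eventuallyEq_zero_of_linear_ode (fun j => ?_) hode ?_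
    · fin_cases j
      exacts [(hQ a ha).deriv.div_const, hQ a ha, analyticAt_const]
    · intro j hj
      interval_cases j <;> simpa [iteratedDeriv_succ]
  exact hs.eqOn_zero_of_preconnected_of_eventuallyEq_zero hI' ha hloc
end

section
/- Let s : I → ℝ be real analytic on an open interval I, satisfying 2·s·s'' − (s')² = s²·(3s + 2t)·(s + 2t) on I, not identically zero, with an isolated zero at a ∈ I. Then s does not change sign at a: there is a punctured neighborhood of a on which s is either strictly positive throughout or strictly negative throughout. -/
/-!
Write `s = (t - a) ^ n g` with `g a ≠ 0`. Then `2 s s'' - s'² = n (n - 2) g(a)² (t - a) ^ (2n - 2)`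
plus higher-order terms, while the right-hand side `s² (3s + 2t) (s + 2t)` vanishes to order `2n`.
Hence `n = 2`, and `s` has the sign of `g a` on both sides of `a`.
-/

open Filter Set
open scoped Topology

section

variable {𝕜 : Type*} [NontriviallyNormedField 𝕜] {a : 𝕜} {s g : 𝕜 → 𝕜}

lemma analyticOrderAt_ne_top_of_eventually_ne_zero (hs : ∀ᶠ z in 𝓝[≠] a, s z ≠ 0) :
    analyticOrderAt s a ≠ ⊤ := fun htop =>
  have hzero : ∀ᶠ z in 𝓝[≠] a, s z = 0 := nhdsWithin_le_nhds (analyticOrderAt_eq_top.mp htop)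
  (hzero.and hs).exists.elim fun _ h => h.2 h.1

lemma exists_deriv_eventuallyEq_sub_pow_mul [CompleteSpace 𝕜] {k : ℕ} (hg : AnalyticAt 𝕜 g a)
    (hs : s =ᶠ[𝓝 a] fun z => (z - a) ^ (k + 1) * g z) :
    ∃ h : 𝕜 → 𝕜, AnalyticAt 𝕜 h a ∧ h a = (k + 1) * g a ∧
      deriv s =ᶠ[𝓝 a] fun z => (z - a) ^ k * h z := by
  refine ⟨fun z => (k + 1) * g z + (z - a) * deriv g z, by fun_prop, by simp, ?_⟩
  filter_upwards [hs.deriv, hg.eventually_analyticAt] with z hz hgz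
  have hpow : HasDerivAt (fun w : 𝕜 => (w - a) ^ (k + 1)) ((k + 1) * (z - a) ^ k) z := by
    simpa using ((hasDerivAt_id z).sub_const a).fun_pow (k + 1)
  rw [hz, (hpow.fun_mul hgz.differentiableAt.hasDerivAt).deriv]
  ring

end

section

variable {a : ℝ} {s : ℝ → ℝ}

lemma analyticOrderAt_eq_two_of_two_mul_deriv_deriv_sub_sq {q : ℝ → ℝ} (hs : AnalyticAt ℝ s a)
    (hq : ContinuousAt q a)
    (hode : ∀ᶠ z in 𝓝 a, 2 * s z * deriv (deriv s) z - deriv s z ^ 2 = s z ^ 2 * q z)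
    (h0 : s a = 0) (hfin : analyticOrderAt s a ≠ ⊤) : analyticOrderAt s a = 2 := by
  obtain ⟨n, hn⟩ := ENat.ne_top_iff_exists.mp hfin
  obtain ⟨g, hg, hga, hsg⟩ := hs.analyticOrderAt_eq_natCast.mp hn.symm
  simp only [smul_eq_mul] at hsg
  have hds : deriv s a = 0 := by
    have h := hode.self_of_nhds
    rw [h0] at h
    exact pow_eq_zero_iff two_ne_zero |>.mp (by linarith)
  obtain ⟨k, rfl⟩ : ∃ k, n = k + 1 := Nat.exists_eq_add_one.mpr <| Nat.pos_of_ne_zero <| by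
    rintro rfl
    simp [hsg.self_of_nhds] at h0
    exact hga h0
  obtain ⟨h₁, hh₁, hh₁a, hs'⟩ := exists_deriv_eventuallyEq_sub_pow_mul hg hsg
  obtain ⟨m, rfl⟩ : ∃ m, k = m + 1 := Nat.exists_eq_add_one.mpr <| Nat.pos_of_ne_zero <| by
    rintro rfl
    simp [hs'.self_of_nhds, hh₁a] at hds
    exact hga hds
  obtain ⟨h₂, hh₂, hh₂a, hs''⟩ := exists_deriv_eventuallyEq_sub_pow_mul hh₁ hs'
  have hcancel : (fun z => 2 * g z * h₂ z - h₁ z ^ 2) =ᶠ[𝓝[≠] a]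
      fun z => (z - a) ^ 2 * g z ^ 2 * q z := by
    filter_upwards [nhdsWithin_le_nhds (hode.and (hsg.and (hs'.and hs''))), self_mem_nhdsWithin]
      with z ⟨hz, hz₀, hz₁, hz₂⟩ hza
    rw [hz₀, hz₁, hz₂] at hz
    refine mul_left_cancel₀ (pow_ne_zero (2 * m + 2) (sub_ne_zero.mpr hza)) ?_
    linear_combination hz
  have hlead := ((ContinuousAt.eventuallyEq_nhds_iff_eventuallyEq_nhdsNE
    (by fun_prop) (by fun_prop)).mp hcancel).self_of_nhds
  simp only [sub_self, hh₂a, hh₁a] at hlead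
  have hm : (m : ℝ) * (m + 2) * g a ^ 2 = 0 := by push_cast at hlead; linear_combination hlead
  obtain rfl : m = 0 := by simpa [hga, add_eq_zero_iff_of_nonneg] using hm
  exact hn.symm

lemma eventually_pos_or_eventually_neg_of_analyticOrderAt_even {n : ℕ} (hs : AnalyticAt ℝ s a)
    (hn : analyticOrderAt s a = n) (he : Even n) :
    (∀ᶠ z in 𝓝[≠] a, 0 < s z) ∨ ∀ᶠ z in 𝓝[≠] a, s z < 0 := by
  obtain ⟨g, hg, hga, hsg⟩ := hs.analyticOrderAt_eq_natCast.mp hn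
  have hsg' : ∀ᶠ z in 𝓝[≠] a, s z = (z - a) ^ n • g z := nhdsWithin_le_nhds hsg
  have hpow : ∀ᶠ z in 𝓝[≠] a, 0 < (z - a) ^ n :=
    eventually_mem_nhdsWithin.mono fun z hz => he.pow_pos (sub_ne_zero.mpr hz)
  rcases hga.lt_or_gt with hneg | hpos
  · refine .inr ?_
    filter_upwards [hsg', hpow,
      nhdsWithin_le_nhds (hg.continuousAt.eventually_lt continuousAt_const hneg)] with z hz hz₁ hz₂
    rw [hz, smul_eq_mul]
    exact mul_neg_of_pos_of_neg hz₁ hz₂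
  · refine .inl ?_
    filter_upwards [hsg', hpow,
      nhdsWithin_le_nhds (continuousAt_const.eventually_lt hg.continuousAt hpos)] with z hz hz₁ hz₂
    rw [hz, smul_eq_mul]
    exact mul_pos hz₁ hz₂

lemma exists_Ioo_of_eventually_nhdsNE {I : Set ℝ} {p : ℝ → Prop} (hI : I ∈ 𝓝 a)
    (hp : ∀ᶠ z in 𝓝[≠] a, p z) :
    ∃ ε > 0, Ioo (a - ε) (a + ε) ⊆ I ∧ ∀ t ∈ Ioo (a - ε) (a + ε), t ≠ a → p t := by
  obtain ⟨ε, hε, hball⟩ := Metric.eventually_nhds_iff_ball.mp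
    (Filter.Eventually.and hI (eventually_nhdsWithin_iff.mp hp))
  refine ⟨ε, hε, ?_⟩
  rw [← Real.ball_eq_Ioo]
  exact ⟨fun t ht => (hball t ht).1, fun t ht => (hball t ht).2⟩

end

theorem stmt_15_general (I : Set ℝ) (hI : IsOpen I) (s : ℝ → ℝ) (a : ℝ)
    (ha : a ∈ I) (hs : AnalyticOnNhd ℝ s I)
    (heq : ∀ t ∈ I, 2 * s t * deriv (deriv s) t - (deriv s t) ^ 2
      = (s t) ^ 2 * (3 * s t + 2 * t) * (s t + 2 * t))
    (h0 : s a = 0)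
    (hiso : ∃ ε > 0, ∀ t ∈ I, t ≠ a → |t - a| < ε → s t ≠ 0) :
    ∃ ε > 0, Set.Ioo (a - ε) (a + ε) ⊆ I ∧
      ((∀ t ∈ Set.Ioo (a - ε) (a + ε), t ≠ a → 0 < s t) ∨
       (∀ t ∈ Set.Ioo (a - ε) (a + ε), t ≠ a → s t < 0)) := by
  have hIa : I ∈ 𝓝 a := hI.mem_nhds ha
  have hsa : AnalyticAt ℝ s a := hs a ha
  have hne : ∀ᶠ t in 𝓝[≠] a, s t ≠ 0 := by
    obtain ⟨ε, hε, hiso⟩ := hiso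
    filter_upwards [mem_nhdsWithin_of_mem_nhds hIa,
      mem_nhdsWithin_of_mem_nhds (Metric.ball_mem_nhds a hε), self_mem_nhdsWithin] with t htI htε hta
    exact hiso t htI hta htε
  have hord : analyticOrderAt s a = 2 :=
    analyticOrderAt_eq_two_of_two_mul_deriv_deriv_sub_sq hsa (by fun_prop)
      (Filter.mem_of_superset hIa fun t ht => (heq t ht).trans (mul_assoc _ _ _)) h0
      (analyticOrderAt_ne_top_of_eventually_ne_zero hne)
  rcases eventually_pos_or_eventually_neg_of_analyticOrderAt_even hsa hord even_two with hp | hp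
  · obtain ⟨ε, hε, hsub, hpos⟩ := exists_Ioo_of_eventually_nhdsNE hIa hp
    exact ⟨ε, hε, hsub, .inl hpos⟩
  · obtain ⟨ε, hε, hsub, hneg⟩ := exists_Ioo_of_eventually_nhdsNE hIa hp
    exact ⟨ε, hε, hsub, .inr hneg⟩

theorem stmt_15 (I : Set ℝ) (hI : IsOpen I) (hI' : IsPreconnected I) (s : ℝ → ℝ) (a : ℝ)
    (ha : a ∈ I) (hs : AnalyticOnNhd ℝ s I)
    (heq : ∀ t ∈ I, 2 * s t * deriv (deriv s) t - (deriv s t) ^ 2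
      = (s t) ^ 2 * (3 * s t + 2 * t) * (s t + 2 * t))
    (hnz : ¬ ∀ t ∈ I, s t = 0)
    (h0 : s a = 0)
    (hiso : ∃ ε > 0, ∀ t ∈ I, t ≠ a → |t - a| < ε → s t ≠ 0) :
    ∃ ε > 0, Set.Ioo (a - ε) (a + ε) ⊆ I ∧
      ((∀ t ∈ Set.Ioo (a - ε) (a + ε), t ≠ a → 0 < s t) ∨
       (∀ t ∈ Set.Ioo (a - ε) (a + ε), t ≠ a → s t < 0)) :=
  stmt_15_general I hI s a ha hs heq h0 hiso
end

section
/- Let s : I → ℝ be a non-identically-zero real analytic solution of 2·s·s'' − (s')² = s²·(3s + 2t)·(s + 2t) on I with s(a) = 0. Then s''(a) ≠ 0. -/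
/-!
At a zero `a` of `s` the equation forces `s'(a) = 0`, so `s = (t - a) ^ n * g` near `a` with
`n ≥ 2` and `g(a) ≠ 0`. The left-hand side `2 s s'' - s'²` is then
`n (n - 2) g(a)² (t - a) ^ (2 n - 2)` plus higher order terms, while the right-hand side is
divisible by `s² = (t - a) ^ (2 n) * g²`. Hence `n = 2` and `s''(a) = 2 g(a) ≠ 0`.
-/

open Filter Topology

section

variable {𝕜 : Type*} [NontriviallyNormedField 𝕜] {f g : 𝕜 → 𝕜} {a : 𝕜}

theorem ne_zero_of_eventuallyEq_pow_mul {n : ℕ} (hf : f =ᶠ[𝓝 a] fun z => (z - a) ^ n * g z)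
    (hfa : f a = 0) (hga : g a ≠ 0) : n ≠ 0 := by
  rintro rfl
  simp_all [hf.self_of_nhds]

theorem eq_of_eventually_pow_mul_eq {u v : 𝕜 → 𝕜} (hu : ContinuousAt u a) (hv : ContinuousAt v a)
    (N : ℕ) (h : ∀ᶠ z in 𝓝 a, (z - a) ^ N * u z = (z - a) ^ N * v z) : u a = v a := by
  have hne : u =ᶠ[𝓝[≠] a] v := by
    filter_upwards [nhdsWithin_le_nhds h, self_mem_nhdsWithin] with z hz hza
    exact mul_left_cancel₀ (pow_ne_zero _ (sub_ne_zero.mpr hza)) hz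
  exact tendsto_nhds_unique (hu.tendsto.mono_left nhdsWithin_le_nhds)
    ((hv.tendsto.mono_left nhdsWithin_le_nhds).congr' hne.symm)

variable [CompleteSpace 𝕜]

theorem AnalyticAt.exists_deriv_eventuallyEq_pow_mul {m : ℕ} (hg : AnalyticAt 𝕜 g a)
    (hf : f =ᶠ[𝓝 a] fun z => (z - a) ^ (m + 1) * g z) :
    ∃ g' : 𝕜 → 𝕜, AnalyticAt 𝕜 g' a ∧ g' a = (m + 1) * g a ∧
      deriv f =ᶠ[𝓝 a] fun z => (z - a) ^ m * g' z := by
  refine ⟨fun z => (m + 1) * g z + (z - a) * deriv g z, by fun_prop, by simp, ?_⟩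
  filter_upwards [hf.deriv, hg.eventually_analyticAt] with z hfz hgz
  have hpow : HasDerivAt (fun z => (z - a) ^ (m + 1)) ((m + 1 : ℕ) * (z - a) ^ m) z := by
    simpa using ((hasDerivAt_id z).sub_const a).fun_pow (m + 1)
  rw [hfz, (hpow.fun_mul hgz.differentiableAt.hasDerivAt).deriv]
  push_cast
  ring

theorem AnalyticAt.deriv_deriv_eq_of_eventuallyEq_sq_mul (hg : AnalyticAt 𝕜 g a)
    (hf : f =ᶠ[𝓝 a] fun z => (z - a) ^ 2 * g z) : deriv (deriv f) a = 2 * g a := by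
  obtain ⟨g₁, hg₁, hg₁a, hf'⟩ := hg.exists_deriv_eventuallyEq_pow_mul (m := 1) hf
  obtain ⟨g₂, -, hg₂a, hf''⟩ := hg₁.exists_deriv_eventuallyEq_pow_mul (m := 0) (by simpa using hf')
  rw [hf''.self_of_nhds]
  simp only [hg₂a, hg₁a]
  ring

theorem AnalyticAt.exists_two_mul_deriv_deriv_sub_sq_eventuallyEq {k : ℕ} (hg : AnalyticAt 𝕜 g a)
    (hf : f =ᶠ[𝓝 a] fun z => (z - a) ^ (k + 2) * g z) :
    ∃ h : 𝕜 → 𝕜, ContinuousAt h a ∧ h a = ((k * (k + 2) : ℕ) : 𝕜) * g a ^ 2 ∧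
      (fun z => 2 * f z * deriv (deriv f) z - deriv f z ^ 2)
        =ᶠ[𝓝 a] fun z => (z - a) ^ (2 * k + 2) * h z := by
  obtain ⟨g₁, hg₁, hg₁a, hf'⟩ := hg.exists_deriv_eventuallyEq_pow_mul hf
  obtain ⟨g₂, hg₂, hg₂a, hf''⟩ := hg₁.exists_deriv_eventuallyEq_pow_mul hf'
  refine ⟨fun z => 2 * g z * g₂ z - g₁ z ^ 2, by fun_prop, ?_, ?_⟩
  · simp only [hg₂a, hg₁a]
    push_cast
    ring
  · filter_upwards [hf, hf', hf''] with z hfz hf'z hf''z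
    rw [hfz, hf'z, hf''z]
    ring

variable [CharZero 𝕜]

theorem AnalyticAt.deriv_deriv_ne_zero_of_two_mul_deriv_deriv_sub_sq_eq {q : 𝕜 → 𝕜}
    (hf : AnalyticAt 𝕜 f a) (hf_ne : ¬∀ᶠ z in 𝓝 a, f z = 0) (hq : ContinuousAt q a)
    (hode : ∀ᶠ z in 𝓝 a, 2 * f z * deriv (deriv f) z - deriv f z ^ 2 = f z ^ 2 * q z)
    (hfa : f a = 0) : deriv (deriv f) a ≠ 0 := by
  have hf'a : deriv f a = 0 := by simpa [hfa] using hode.self_of_nhds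
  obtain ⟨n, g, hg, hga, hfg⟩ := hf.exists_eventuallyEq_pow_smul_nonzero_iff.mpr hf_ne
  simp only [smul_eq_mul] at hfg
  obtain ⟨m, rfl⟩ := Nat.exists_eq_add_one.mpr
    (Nat.pos_of_ne_zero (ne_zero_of_eventuallyEq_pow_mul hfg hfa hga))
  obtain ⟨g₁, -, hg₁a, hf'⟩ := hg.exists_deriv_eventuallyEq_pow_mul hfg
  have hg₁a_ne : g₁ a ≠ 0 := by simp [hg₁a, hga, Nat.cast_add_one_ne_zero]
  obtain ⟨k, rfl⟩ := Nat.exists_eq_add_one.mpr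
    (Nat.pos_of_ne_zero (ne_zero_of_eventuallyEq_pow_mul hf' hf'a hg₁a_ne))
  obtain ⟨h, hh, hha, hfh⟩ := hg.exists_two_mul_deriv_deriv_sub_sq_eventuallyEq hfg
  -- the right-hand side `f² q` vanishes to order `2 k + 4`, two more than the left-hand side
  have hha0 : h a = 0 := by
    refine (eq_of_eventually_pow_mul_eq hh (v := fun z => (z - a) ^ 2 * (g z ^ 2 * q z))
      (by fun_prop) (2 * k + 2) ?_).trans (by simp)
    filter_upwards [hfh, hode, hfg] with z hhz hodez hfz
    rw [← hhz, hodez, hfz]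
    ring
  rw [hha, mul_eq_zero, Nat.cast_eq_zero] at hha0
  obtain rfl : k = 0 := by simpa using hha0.resolve_right (pow_ne_zero 2 hga)
  rw [hg.deriv_deriv_eq_of_eventuallyEq_sq_mul hfg]
  simpa using hga

end

theorem stmt_16 (I : Set ℝ) (hI : IsOpen I) (hI' : IsPreconnected I) (s : ℝ → ℝ) (a : ℝ)
    (ha : a ∈ I) (hs : AnalyticOnNhd ℝ s I)
    (heq : ∀ t ∈ I, 2 * s t * deriv (deriv s) t - (deriv s t) ^ 2
      = (s t) ^ 2 * (3 * s t + 2 * t) * (s t + 2 * t))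
    (hnz : ¬ ∀ t ∈ I, s t = 0)
    (h0 : s a = 0) :
    deriv (deriv s) a ≠ 0 := by
  have hs_ne : ¬∀ᶠ z in 𝓝 a, s z = 0 := fun h =>
    hnz fun t ht => hs.eqOn_zero_of_preconnected_of_eventuallyEq_zero hI' ha h ht
  have hs_cont := (hs a ha).continuousAt
  refine (hs a ha).deriv_deriv_ne_zero_of_two_mul_deriv_deriv_sub_sq_eq hs_ne
    (q := fun t => (3 * s t + 2 * t) * (s t + 2 * t)) (by fun_prop) ?_ h0
  filter_upwards [hI.mem_nhds ha] with t ht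
  rw [heq t ht, mul_assoc]
end

section
/- Let s : I → ℝ be twice differentiable and strictly negative on the open interval I, satisfying s'' = (s')²/(2s) + (3/2)s³ + 4t·s² + 2t²·s on I. Then σ := √(−s) is twice differentiable and satisfies 4·σ''(t) = σ(t)·(3σ(t)² − 2t)·(σ(t)² − 2t) on I. -/
/-! With `g = -s > 0` and `σ = √g`, the quotient rule gives `4 σ'' = (2 g g'' - g'²) / (g σ)`.
Substituting the equation for `s''` turns the numerator into `s² (3s + 2t)(s + 2t)`, and
`s² / (g σ) = σ`, `s = -σ²` give the right-hand side. -/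

open Filter Topology

section SqrtDerivatives

variable {U : Set ℝ} {g g' : ℝ → ℝ}

lemma deriv_sqrt_eventuallyEq (hU : IsOpen U) (hg : ∀ u ∈ U, HasDerivAt g (g' u) u)
    (hpos : ∀ u ∈ U, 0 < g u) {t : ℝ} (ht : t ∈ U) :
    deriv (fun u => √(g u)) =ᶠ[𝓝 t] fun u => g' u / (2 * √(g u)) := by
  filter_upwards [hU.mem_nhds ht] with u hu
  exact ((hg u hu).sqrt (hpos u hu).ne').deriv

lemma hasDerivAt_deriv_sqrt (hU : IsOpen U) (hg : ∀ u ∈ U, HasDerivAt g (g' u) u)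
    (hpos : ∀ u ∈ U, 0 < g u) {t g'' : ℝ} (ht : t ∈ U) (hg' : HasDerivAt g' g'' t) :
    HasDerivAt (deriv fun u => √(g u))
      ((2 * g t * g'' - g' t ^ 2) / (4 * g t * √(g t))) t := by
  have hgt := hpos t ht
  have hσt : 0 < √(g t) := Real.sqrt_pos.mpr hgt
  have hσ : HasDerivAt (fun u => 2 * √(g u)) (2 * (g' t / (2 * √(g t)))) t :=
    ((hg t ht).sqrt hgt.ne').const_mul 2
  refine ((hg'.div hσ (by positivity)).congr_of_eventuallyEq
    (deriv_sqrt_eventuallyEq hU hg hpos ht)).congr_deriv ?_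
  have hsq : √(g t) ^ 2 = g t := Real.sq_sqrt hgt.le
  field_simp
  rw [hsq]
  ring

end SqrtDerivatives

lemma four_mul_sqrt_second_deriv_eq {s s' t : ℝ} (hs : s < 0) :
    4 * ((2 * -s * -(s' ^ 2 / (2 * s) + 3 / 2 * s ^ 3 + 4 * t * s ^ 2 + 2 * t ^ 2 * s)
        - (-s') ^ 2) / (4 * -s * √(-s)))
      = √(-s) * (3 * √(-s) ^ 2 - 2 * t) * (√(-s) ^ 2 - 2 * t) := by
  have hs0 : s ≠ 0 := hs.ne
  have hσ : 0 < √(-s) := Real.sqrt_pos.mpr (neg_pos.mpr hs)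
  have hsq : √(-s) ^ 2 = -s := Real.sq_sqrt (neg_pos.mpr hs).le
  field_simp
  rw [hsq]
  ring

theorem stmt_19_general (I : Set ℝ) (hI : IsOpen I) (s : ℝ → ℝ)
    (hs1 : ∀ t ∈ I, DifferentiableAt ℝ s t)
    (hs2 : ∀ t ∈ I, DifferentiableAt ℝ (deriv s) t)
    (hneg : ∀ t ∈ I, s t < 0)
    (heq : ∀ t ∈ I, deriv (deriv s) t
      = (deriv s t) ^ 2 / (2 * s t) + (3 / 2) * (s t) ^ 3 + 4 * t * (s t) ^ 2 + 2 * t ^ 2 * s t) :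
    (∀ t ∈ I, DifferentiableAt ℝ (fun u => Real.sqrt (-s u)) t) ∧
    (∀ t ∈ I, DifferentiableAt ℝ (deriv (fun u => Real.sqrt (-s u))) t) ∧
    (∀ t ∈ I, 4 * deriv (deriv (fun u => Real.sqrt (-s u))) t
      = Real.sqrt (-s t) * (3 * (Real.sqrt (-s t)) ^ 2 - 2 * t)
        * ((Real.sqrt (-s t)) ^ 2 - 2 * t)) := by
  have hpos : ∀ t ∈ I, 0 < -s t := fun t ht => neg_pos.mpr (hneg t ht)
  have hds : ∀ t ∈ I, HasDerivAt (fun u => -s u) (-deriv s t) t :=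
    fun t ht => (hs1 t ht).hasDerivAt.neg
  have hdds : ∀ t ∈ I, HasDerivAt (fun u => -deriv s u) (-deriv (deriv s) t) t :=
    fun t ht => (hs2 t ht).hasDerivAt.neg
  have hσ'' := fun t ht => hasDerivAt_deriv_sqrt hI hds hpos ht (hdds t ht)
  refine ⟨fun t ht => ((hds t ht).sqrt (hpos t ht).ne').differentiableAt,
    fun t ht => (hσ'' t ht).differentiableAt, fun t ht => ?_⟩
  rw [(hσ'' t ht).deriv, heq t ht]
  exact four_mul_sqrt_second_deriv_eq (hneg t ht)

theorem stmt_19 (I : Set ℝ) (hI : IsOpen I) (hI' : IsPreconnected I) (s : ℝ → ℝ)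
    (hs1 : ∀ t ∈ I, DifferentiableAt ℝ s t)
    (hs2 : ∀ t ∈ I, DifferentiableAt ℝ (deriv s) t)
    (hneg : ∀ t ∈ I, s t < 0)
    (heq : ∀ t ∈ I, deriv (deriv s) t
      = (deriv s t) ^ 2 / (2 * s t) + (3 / 2) * (s t) ^ 3 + 4 * t * (s t) ^ 2 + 2 * t ^ 2 * s t) :
    (∀ t ∈ I, DifferentiableAt ℝ (fun u => Real.sqrt (-s u)) t) ∧
    (∀ t ∈ I, DifferentiableAt ℝ (deriv (fun u => Real.sqrt (-s u))) t) ∧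
    (∀ t ∈ I, 4 * deriv (deriv (fun u => Real.sqrt (-s u))) t
      = Real.sqrt (-s t) * (3 * (Real.sqrt (-s t)) ^ 2 - 2 * t)
        * ((Real.sqrt (-s t)) ^ 2 - 2 * t)) :=
  stmt_19_general I hI s hs1 hs2 hneg heq
end
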